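/- In the contact-functional setting, the functional J(w,v) = ∫_{Γ_C} j(x, w(x), v(x)) dμ is well defined and real-valued on X × X with X = L²(μ; ℝ^d), J(w,·) is locally Lipschitz for every w ∈ X, and every ζ ∈ ∂₂J(w,v) satisfies ‖ζ‖_{X*} ≤ √(μ(Γ_C)) (ḡ_ν + ḡ_τ c_τ) for all w, v ∈ X; in particular J satisfies the growth condition H(J)(b) with c₂ = 0. -/

import Mathlib

open Filter MeasureTheory

/-- Clarke generalized directional derivative. -/
noncomputable def clarkeDeriv {Y : Type*} [NormedAddCommGroup Y] [NormedSpace ℝ Y]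
    (φ : Y → ℝ) (y z : Y) : ℝ :=
  Filter.limsup (fun p : Y × ℝ => (φ (p.1 + p.2 • z) - φ p.1) / p.2)
    ((nhds y) ×ˢ (nhdsWithin 0 (Set.Ioi 0)))

/-- Clarke subdifferential. -/
def clarkeSubdiff {Y : Type*} [NormedAddCommGroup Y] [NormedSpace ℝ Y]
    (φ : Y → ℝ) (y : Y) : Set (Y →L[ℝ] ℝ) :=
  {ξ | ∀ z, ξ z ≤ clarkeDeriv φ y z}

/-- The contact integrand `j(x, η, ξ) = g_ν(x, η_ν) ξ_ν + g_τ(x, η_ν) j_τ(x, ξ_τ)`,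
where `η_ν = η·ν(x)` and `η_τ = η − η_ν ν(x)`. -/
noncomputable def jfun {Ω : Type*} {d : ℕ}
    (ν : Ω → EuclideanSpace ℝ (Fin d)) (gν gτ : Ω → ℝ → ℝ)
    (jτ : Ω → EuclideanSpace ℝ (Fin d) → ℝ)
    (x : Ω) (η ξ : EuclideanSpace ℝ (Fin d)) : ℝ :=
  gν x (inner ℝ η (ν x)) * (inner ℝ ξ (ν x) : ℝ) +
    gτ x (inner ℝ η (ν x)) * jτ x (ξ - (inner ℝ ξ (ν x) : ℝ) • ν x)

/-- The contact functional `J(w, v) = ∫_{Γ_C} j(x, w(x), v(x)) dμ` on `X = L²(μ; ℝ^d)`. -/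
noncomputable def Jfun {Ω : Type*} [MeasurableSpace Ω] {d : ℕ} (μ : Measure Ω)
    (ν : Ω → EuclideanSpace ℝ (Fin d)) (gν gτ : Ω → ℝ → ℝ)
    (jτ : Ω → EuclideanSpace ℝ (Fin d) → ℝ)
    (w v : Lp (EuclideanSpace ℝ (Fin d)) 2 μ) : ℝ :=
  ∫ x, jfun ν gν gτ jτ x (w x) (v x) ∂μ

/-!
For a.e. `x`, `ξ ↦ j(x, η, ξ)` is Lipschitz with constant `ḡ_ν + ḡ_τ c_τ`, because for a unit
normal both `ξ ↦ ξ_ν` and `ξ ↦ ξ_τ` are 1-Lipschitz. Since `‖u‖_{L¹} ≤ √μ(Γ_C) ‖u‖_{L²}`,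
integrating makes `J(w, ·)` Lipschitz on `L²` with constant `K = √μ(Γ_C) (ḡ_ν + ḡ_τ c_τ)`; the
same pointwise bound together with `j_τ(·, e(·)) ∈ L¹` gives integrability. Finally the Clarke
derivative of a `K`-Lipschitz function in direction `z` is at most `K ‖z‖`, so its Clarke
subgradients have norm at most `K`.
-/

open scoped Topology NNReal

section LpFunctional

variable {Ω : Type*} [MeasurableSpace Ω] {μ : Measure Ω}

theorem aemeasurable_comp_of_ae_continuous {E : Type*} [MeasurableSpace E] [TopologicalSpace E]
    [TopologicalSpace.MetrizableSpace E] [SecondCountableTopology E] [OpensMeasurableSpace E]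
    {g : Ω → E → ℝ} (hg : ∀ r, Measurable fun x => g x r) (hcont : ∀ᵐ x ∂μ, Continuous (g x))
    {f : Ω → E} (hf : AEMeasurable f μ) : AEMeasurable (fun x => g x (f x)) μ := by
  set N := toMeasurable μ {x | ¬Continuous (g x)}
  have hN : MeasurableSet N := measurableSet_toMeasurable _ _
  -- modify `g` on a null set so that it becomes continuous in `r` for every `x`
  set g' : E → Ω → ℝ := fun r => Nᶜ.indicator fun x => g x r
  have hg' : Measurable (Function.uncurry g') := by
    refine measurable_uncurry_of_continuous_of_measurable (fun x => ?_)
      fun r => (hg r).indicator hN.compl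
    by_cases hx : x ∈ N
    · simp [g', hx, continuous_const]
    · simpa [g', hx] using not_not.1 fun h => hx (subset_toMeasurable _ _ h)
  refine (hg'.comp_aemeasurable (hf.prodMk aemeasurable_id)).congr ?_
  have hN0 : μ N = 0 := by rw [measure_toMeasurable]; exact ae_iff.1 hcont
  filter_upwards [measure_eq_zero_iff_ae_notMem.1 hN0] with x hx
  simp [g', hx]

variable {E : Type*} [NormedAddCommGroup E] [IsFiniteMeasure μ] {f : Ω → E → ℝ} {K : ℝ}

theorem integral_norm_le_sqrt_measure_univ_mul_norm (u : Lp E 2 μ) :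
    ∫ x, ‖u x‖ ∂μ ≤ √(μ Set.univ).toReal * ‖u‖ := by
  have h := eLpNorm_le_eLpNorm_mul_rpow_measure_univ (p := 1) (q := 2) one_le_two
    (Lp.aestronglyMeasurable u)
  rw [integral_norm_eq_lintegral_enorm (Lp.aestronglyMeasurable u),
    ← eLpNorm_one_eq_lintegral_enorm, Lp.norm_def, Real.sqrt_eq_rpow, ENNReal.toReal_rpow,
    mul_comm, ← ENNReal.toReal_mul]
  norm_num at h
  exact ENNReal.toReal_mono (by finiteness) h

theorem integrable_comp_Lp_of_lipschitz (hf : ∀ᵐ x ∂μ, ∀ ξ₁ ξ₂, |f x ξ₁ - f x ξ₂| ≤ K * ‖ξ₁ - ξ₂‖)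
    (h0 : Integrable (fun x => f x 0) μ) {u : Lp E 2 μ}
    (hu : AEStronglyMeasurable (fun x => f x (u x)) μ) :
    Integrable (fun x => f x (u x)) μ := by
  have hbound : Integrable (fun x => |f x 0| + K * ‖u x‖) μ :=
    h0.abs.add (((Lp.memLp u).integrable one_le_two).norm.const_mul K)
  refine hbound.mono' hu (hf.mono fun x hx => ?_)
  have := hx (u x) 0
  rw [sub_zero] at this
  rw [Real.norm_eq_abs]
  linarith [abs_sub_abs_le_abs_sub (f x (u x)) (f x 0)]

theorem lipschitzWith_integral_comp_Lp (hK : 0 ≤ K)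
    (hf : ∀ᵐ x ∂μ, ∀ ξ₁ ξ₂, |f x ξ₁ - f x ξ₂| ≤ K * ‖ξ₁ - ξ₂‖)
    (h0 : Integrable (fun x => f x 0) μ)
    (hmeas : ∀ u : Lp E 2 μ, AEStronglyMeasurable (fun x => f x (u x)) μ) :
    LipschitzWith (Real.toNNReal (√(μ Set.univ).toReal * K))
      (fun u : Lp E 2 μ => ∫ x, f x (u x) ∂μ) := by
  refine LipschitzWith.of_dist_le' fun u₁ u₂ => ?_
  have hint := fun u => integrable_comp_Lp_of_lipschitz hf h0 (hmeas u)
  have hsub : ∀ᵐ x ∂μ, |f x (u₁ x) - f x (u₂ x)| ≤ K * ‖(u₁ - u₂ : Lp E 2 μ) x‖ := by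
    filter_upwards [hf, Lp.coeFn_sub u₁ u₂] with x hx hx'
    rw [hx', Pi.sub_apply]
    exact hx _ _
  rw [Real.dist_eq, dist_eq_norm, ← integral_sub (hint u₁) (hint u₂)]
  calc |∫ x, f x (u₁ x) - f x (u₂ x) ∂μ| ≤ ∫ x, |f x (u₁ x) - f x (u₂ x)| ∂μ :=
        abs_integral_le_integral_abs
    _ ≤ ∫ x, K * ‖(u₁ - u₂ : Lp E 2 μ) x‖ ∂μ :=
        integral_mono_ae ((hint u₁).sub (hint u₂)).abs
          (((Lp.memLp _).integrable one_le_two).norm.const_mul K) hsub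
    _ ≤ √(μ Set.univ).toReal * K * ‖u₁ - u₂‖ := by
        rw [integral_const_mul, mul_comm _ K, mul_assoc]
        exact mul_le_mul_of_nonneg_left (integral_norm_le_sqrt_measure_univ_mul_norm _) hK

end LpFunctional

theorem norm_sub_inner_smul_le {F : Type*} [NormedAddCommGroup F] [InnerProductSpace ℝ F]
    {ν : F} (hν : ‖ν‖ = 1) (ξ : F) : ‖ξ - inner ℝ ξ ν • ν‖ ≤ ‖ξ‖ := by
  have hsq : ‖ξ - inner ℝ ξ ν • ν‖ ^ 2 = ‖ξ‖ ^ 2 - inner ℝ ξ ν ^ 2 := by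
    rw [norm_sub_sq_real, real_inner_smul_right, norm_smul, hν, Real.norm_eq_abs, mul_one, sq_abs]
    ring
  exact pow_le_pow_iff_left₀ (norm_nonneg _) (norm_nonneg _) two_ne_zero |>.1 <| by
    rw [hsq]; nlinarith [sq_nonneg (inner ℝ ξ ν)]

section Clarke

variable {Y : Type*} [NormedAddCommGroup Y] [NormedSpace ℝ Y] {φ : Y → ℝ} {K : ℝ≥0}

theorem clarkeDeriv_le_of_lipschitzWith (hφ : LipschitzWith K φ) (y z : Y) :
    clarkeDeriv φ y z ≤ K * ‖z‖ := by
  have hquot : ∀ᶠ p : Y × ℝ in 𝓝 y ×ˢ 𝓝[>] 0,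
      |(φ (p.1 + p.2 • z) - φ p.1) / p.2| ≤ K * ‖z‖ := by
    filter_upwards [eventually_mem_nhdsWithin.prod_inr (𝓝 y)] with p (hp : 0 < p.2)
    rw [abs_div, abs_of_pos hp, div_le_iff₀ hp]
    calc |φ (p.1 + p.2 • z) - φ p.1| ≤ K * ‖p.1 + p.2 • z - p.1‖ := by
          simpa only [dist_eq_norm, Real.norm_eq_abs] using hφ.dist_le_mul _ _
      _ = K * ‖z‖ * p.2 := by
          rw [add_sub_cancel_left, norm_smul, Real.norm_of_nonneg (le_of_lt hp)]; ring
  exact limsup_le_of_le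
    (isCoboundedUnder_le_of_eventually_le _ (hquot.mono fun _ h => (abs_le.1 h).1))
    (hquot.mono fun _ h => (abs_le.1 h).2)

theorem norm_le_of_mem_clarkeSubdiff (hφ : LipschitzWith K φ) {y : Y} {ζ : Y →L[ℝ] ℝ}
    (hζ : ζ ∈ clarkeSubdiff φ y) : ‖ζ‖ ≤ K := by
  refine ζ.opNorm_le_bound K.2 fun z => abs_le.2 ⟨?_, ?_⟩
  · have := (hζ (-z)).trans (clarkeDeriv_le_of_lipschitzWith hφ y (-z))
    rw [map_neg, norm_neg] at this
    linarith
  · exact (hζ z).trans (clarkeDeriv_le_of_lipschitzWith hφ y z)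

end Clarke

section ContactIntegrand

variable {Ω : Type*} {d : ℕ} {ν : Ω → EuclideanSpace ℝ (Fin d)} {gν gτ : Ω → ℝ → ℝ}
  {jτ : Ω → EuclideanSpace ℝ (Fin d) → ℝ} {gbarν gbarτ cτ : ℝ} {x : Ω}

theorem abs_jfun_sub_jfun_le (hcτ : 0 ≤ cτ) (hν : ‖ν x‖ = 1)
    (hgν : ∀ r, 0 ≤ gν x r ∧ gν x r ≤ gbarν) (hgτ : ∀ r, 0 ≤ gτ x r ∧ gτ x r ≤ gbarτ)
    (hjτ : ∀ ξ₁ ξ₂, |jτ x ξ₁ - jτ x ξ₂| ≤ cτ * ‖ξ₁ - ξ₂‖) (η ξ₁ ξ₂ : EuclideanSpace ℝ (Fin d)) :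
    |jfun ν gν gτ jτ x η ξ₁ - jfun ν gν gτ jτ x η ξ₂| ≤ (gbarν + gbarτ * cτ) * ‖ξ₁ - ξ₂‖ := by
  set a := inner ℝ η (ν x) with ha
  have hnormal : |inner ℝ (ξ₁ - ξ₂) (ν x)| ≤ ‖ξ₁ - ξ₂‖ := by
    simpa only [hν, mul_one] using abs_real_inner_le_norm (ξ₁ - ξ₂) (ν x)
  have htangent : |jτ x (ξ₁ - inner ℝ ξ₁ (ν x) • ν x) - jτ x (ξ₂ - inner ℝ ξ₂ (ν x) • ν x)|
      ≤ cτ * ‖ξ₁ - ξ₂‖ := by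
    refine (hjτ _ _).trans (mul_le_mul_of_nonneg_left ?_ hcτ)
    have : ξ₁ - inner ℝ ξ₁ (ν x) • ν x - (ξ₂ - inner ℝ ξ₂ (ν x) • ν x)
        = ξ₁ - ξ₂ - inner ℝ (ξ₁ - ξ₂) (ν x) • ν x := by
      rw [inner_sub_left, sub_smul]; abel
    rw [this]
    exact norm_sub_inner_smul_le hν _
  calc |jfun ν gν gτ jτ x η ξ₁ - jfun ν gν gτ jτ x η ξ₂|
      = |gν x a * inner ℝ (ξ₁ - ξ₂) (ν x) + gτ x a *
          (jτ x (ξ₁ - inner ℝ ξ₁ (ν x) • ν x) - jτ x (ξ₂ - inner ℝ ξ₂ (ν x) • ν x))| := by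
        rw [jfun, jfun, inner_sub_left, ← ha]; ring_nf
    _ ≤ gν x a * ‖ξ₁ - ξ₂‖ + gτ x a * (cτ * ‖ξ₁ - ξ₂‖) := by
        refine (abs_add_le _ _).trans ?_
        rw [abs_mul, abs_mul, abs_of_nonneg (hgν a).1, abs_of_nonneg (hgτ a).1]
        gcongr
        exacts [(hgν a).1, (hgτ a).1]
    _ ≤ gbarν * ‖ξ₁ - ξ₂‖ + gbarτ * (cτ * ‖ξ₁ - ξ₂‖) := by
        have := mul_nonneg hcτ (norm_nonneg (ξ₁ - ξ₂))
        gcongr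
        exacts [(hgν a).2, (hgτ a).2]
    _ = (gbarν + gbarτ * cτ) * ‖ξ₁ - ξ₂‖ := by ring

theorem abs_jfun_zero_le (hgτ : ∀ r, 0 ≤ gτ x r ∧ gτ x r ≤ gbarτ)
    (hjτ : ∀ ξ₁ ξ₂, |jτ x ξ₁ - jτ x ξ₂| ≤ cτ * ‖ξ₁ - ξ₂‖) (η ζ : EuclideanSpace ℝ (Fin d)) :
    |jfun ν gν gτ jτ x η 0| ≤ gbarτ * (|jτ x ζ| + cτ * ‖ζ‖) := by
  have hj0 : |jτ x 0| ≤ |jτ x ζ| + cτ * ‖ζ‖ := by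
    have := hjτ 0 ζ
    rw [zero_sub, norm_neg] at this
    linarith [abs_sub_abs_le_abs_sub (jτ x 0) (jτ x ζ)]
  have hg := hgτ (inner ℝ η (ν x))
  simp only [jfun, inner_zero_left, mul_zero, zero_smul, sub_zero, zero_add, abs_mul,
    abs_of_nonneg hg.1]
  exact mul_le_mul hg.2 hj0 (abs_nonneg _) (hg.1.trans hg.2)

theorem aemeasurable_jfun [MeasurableSpace Ω] {μ : Measure Ω} (hν : Measurable ν)
    (hgν : ∀ r, Measurable fun x => gν x r) (hgτ : ∀ r, Measurable fun x => gτ x r)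
    (hjτ : ∀ ξ, Measurable fun x => jτ x ξ) (hgνc : ∀ᵐ x ∂μ, Continuous (gν x))
    (hgτc : ∀ᵐ x ∂μ, Continuous (gτ x)) (hjτc : ∀ᵐ x ∂μ, Continuous (jτ x))
    {η ξ : Ω → EuclideanSpace ℝ (Fin d)} (hη : AEMeasurable η μ) (hξ : AEMeasurable ξ μ) :
    AEMeasurable (fun x => jfun ν gν gτ jτ x (η x) (ξ x)) μ := by
  have hην := hη.inner hν.aemeasurable (𝕜 := ℝ)
  have hξν := hξ.inner hν.aemeasurable (𝕜 := ℝ)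
  exact ((aemeasurable_comp_of_ae_continuous hgν hgνc hην).mul hξν).add
    ((aemeasurable_comp_of_ae_continuous hgτ hgτc hην).mul
      (aemeasurable_comp_of_ae_continuous hjτ hjτc (hξ.sub (hξν.smul hν.aemeasurable))))

end ContactIntegrand

theorem Jfun_wellDefined_locallyLipschitz_subdiff_bound_general
    {Ω : Type*} [MeasurableSpace Ω] (μ : MeasureTheory.Measure Ω)
    [MeasureTheory.IsFiniteMeasure μ]
    {d : ℕ}
    (ν : Ω → EuclideanSpace ℝ (Fin d)) (hνmeas : Measurable ν)
    (hνunit : ∀ᵐ x ∂μ, ‖ν x‖ = 1)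
    (gν gτ : Ω → ℝ → ℝ)
    (hgνmeas : ∀ r : ℝ, Measurable fun x => gν x r)
    (hgτmeas : ∀ r : ℝ, Measurable fun x => gτ x r)
    (gbarν gbarτ : ℝ) (hgbarν : 0 < gbarν) (hgbarτ : 0 < gbarτ)
    (hgνbd : ∀ᵐ x ∂μ, ∀ r : ℝ, 0 ≤ gν x r ∧ gν x r ≤ gbarν)
    (hgτbd : ∀ᵐ x ∂μ, ∀ r : ℝ, 0 ≤ gτ x r ∧ gτ x r ≤ gbarτ)
    (Lgν Lgτ : ℝ)
    (hgνlip : ∀ᵐ x ∂μ, ∀ r₁ r₂ : ℝ, |gν x r₁ - gν x r₂| ≤ Lgν * |r₁ - r₂|)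
    (hgτlip : ∀ᵐ x ∂μ, ∀ r₁ r₂ : ℝ, |gτ x r₁ - gτ x r₂| ≤ Lgτ * |r₁ - r₂|)
    (jτ : Ω → EuclideanSpace ℝ (Fin d) → ℝ)
    (hjτmeas : ∀ ξ : EuclideanSpace ℝ (Fin d), Measurable fun x => jτ x ξ)
    (cτ : ℝ) (hcτ : 0 < cτ)
    (hjτlip : ∀ᵐ x ∂μ, ∀ ξ₁ ξ₂ : EuclideanSpace ℝ (Fin d),
      |jτ x ξ₁ - jτ x ξ₂| ≤ cτ * ‖ξ₁ - ξ₂‖)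
    (e : Ω → EuclideanSpace ℝ (Fin d)) (he : MeasureTheory.MemLp e 2 μ)
    (hjτe : MeasureTheory.Integrable (fun x => jτ x (e x)) μ)
    :
    (∀ w v : Lp (EuclideanSpace ℝ (Fin d)) 2 μ,
      MeasureTheory.Integrable (fun x => jfun ν gν gτ jτ x (w x) (v x)) μ) ∧
    (∀ w : Lp (EuclideanSpace ℝ (Fin d)) 2 μ, LocallyLipschitz (Jfun μ ν gν gτ jτ w)) ∧
    (∀ w v : Lp (EuclideanSpace ℝ (Fin d)) 2 μ,
      ∀ ζ ∈ clarkeSubdiff (Jfun μ ν gν gτ jτ w) v,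
        ‖ζ‖ ≤ Real.sqrt (μ Set.univ).toReal * (gbarν + gbarτ * cτ)) := by
  have hgνc : ∀ᵐ x ∂μ, Continuous (gν x) :=
    hgνlip.mono fun _ h => (LipschitzWith.of_dist_le' h).continuous
  have hgτc : ∀ᵐ x ∂μ, Continuous (gτ x) :=
    hgτlip.mono fun _ h => (LipschitzWith.of_dist_le' h).continuous
  have hjτc : ∀ᵐ x ∂μ, Continuous (jτ x) :=
    hjτlip.mono fun _ h => (LipschitzWith.of_dist_le' h).continuous
  have hL2 (u : Lp (EuclideanSpace ℝ (Fin d)) 2 μ) : AEMeasurable u μ :=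
    (Lp.aestronglyMeasurable u).aemeasurable
  have hmeas {η ξ : Ω → EuclideanSpace ℝ (Fin d)} (hη : AEMeasurable η μ)
      (hξ : AEMeasurable ξ μ) :
      AEStronglyMeasurable (fun x => jfun ν gν gτ jτ x (η x) (ξ x)) μ :=
    (aemeasurable_jfun hνmeas hgνmeas hgτmeas hjτmeas hgνc hgτc hjτc hη hξ).aestronglyMeasurable
  have hlip : ∀ᵐ x ∂μ, ∀ η ξ₁ ξ₂, |jfun ν gν gτ jτ x η ξ₁ - jfun ν gν gτ jτ x η ξ₂|
      ≤ (gbarν + gbarτ * cτ) * ‖ξ₁ - ξ₂‖ := by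
    filter_upwards [hνunit, hgνbd, hgτbd, hjτlip] with x hν hgν hgτ hjτ
    exact abs_jfun_sub_jfun_le hcτ.le hν hgν hgτ hjτ
  have hzero (w : Lp (EuclideanSpace ℝ (Fin d)) 2 μ) :
      Integrable (fun x => jfun ν gν gτ jτ x (w x) 0) μ := by
    refine ((hjτe.abs.add ((he.integrable one_le_two).norm.const_mul cτ)).const_mul gbarτ).mono'
      (hmeas (hL2 w) aemeasurable_const) ?_
    filter_upwards [hgτbd, hjτlip] with x hgτ hjτ
    exact abs_jfun_zero_le hgτ hjτ (w x) (e x)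
  have hJ (w : Lp (EuclideanSpace ℝ (Fin d)) 2 μ) :=
    lipschitzWith_integral_comp_Lp (by positivity) (hlip.mono fun x h => h (w x)) (hzero w)
      fun v => hmeas (hL2 w) (hL2 v)
  refine ⟨fun w v => integrable_comp_Lp_of_lipschitz (hlip.mono fun x h => h (w x)) (hzero w)
      (hmeas (hL2 w) (hL2 v)),
    fun w => (hJ w).locallyLipschitz, fun w v ζ hζ => ?_⟩
  exact (norm_le_of_mem_clarkeSubdiff (hJ w) hζ).trans_eq (Real.coe_toNNReal _ (by positivity))

/-- The contact functional `J` is well defined on `X × X`, `J(w,·)` is locally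
Lipschitz for each `w`, and every `ζ ∈ ∂₂J(w,v)` satisfies
`‖ζ‖ ≤ √(μ(Γ_C)) (ḡ_ν + ḡ_τ c_τ)`; in particular H(J)(b) holds with `c₂ = 0`. -/
theorem Jfun_wellDefined_locallyLipschitz_subdiff_bound
    {Ω : Type*} [MeasurableSpace Ω] (μ : MeasureTheory.Measure Ω)
    [MeasureTheory.IsFiniteMeasure μ]
    {d : ℕ} (hd : 1 ≤ d)
    (ν : Ω → EuclideanSpace ℝ (Fin d)) (hνmeas : Measurable ν)
    (hνunit : ∀ᵐ x ∂μ, ‖ν x‖ = 1)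
    (gν gτ : Ω → ℝ → ℝ)
    (hgνmeas : ∀ r : ℝ, Measurable fun x => gν x r)
    (hgτmeas : ∀ r : ℝ, Measurable fun x => gτ x r)
    (gbarν gbarτ : ℝ) (hgbarν : 0 < gbarν) (hgbarτ : 0 < gbarτ)
    (hgνbd : ∀ᵐ x ∂μ, ∀ r : ℝ, 0 ≤ gν x r ∧ gν x r ≤ gbarν)
    (hgτbd : ∀ᵐ x ∂μ, ∀ r : ℝ, 0 ≤ gτ x r ∧ gτ x r ≤ gbarτ)
    (Lgν Lgτ : ℝ) (hLgν : 0 < Lgν) (hLgτ : 0 < Lgτ)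
    (hgνlip : ∀ᵐ x ∂μ, ∀ r₁ r₂ : ℝ, |gν x r₁ - gν x r₂| ≤ Lgν * |r₁ - r₂|)
    (hgτlip : ∀ᵐ x ∂μ, ∀ r₁ r₂ : ℝ, |gτ x r₁ - gτ x r₂| ≤ Lgτ * |r₁ - r₂|)
    (jτ : Ω → EuclideanSpace ℝ (Fin d) → ℝ)
    (hjτmeas : ∀ ξ : EuclideanSpace ℝ (Fin d), Measurable fun x => jτ x ξ)
    (cτ : ℝ) (hcτ : 0 < cτ)
    (hjτlip : ∀ᵐ x ∂μ, ∀ ξ₁ ξ₂ : EuclideanSpace ℝ (Fin d),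
      |jτ x ξ₁ - jτ x ξ₂| ≤ cτ * ‖ξ₁ - ξ₂‖)
    (e : Ω → EuclideanSpace ℝ (Fin d)) (he : MeasureTheory.MemLp e 2 μ)
    (hjτe : MeasureTheory.Integrable (fun x => jτ x (e x)) μ)
    :
    (∀ w v : Lp (EuclideanSpace ℝ (Fin d)) 2 μ,
      MeasureTheory.Integrable (fun x => jfun ν gν gτ jτ x (w x) (v x)) μ) ∧
    (∀ w : Lp (EuclideanSpace ℝ (Fin d)) 2 μ, LocallyLipschitz (Jfun μ ν gν gτ jτ w)) ∧
    (∀ w v : Lp (EuclideanSpace ℝ (Fin d)) 2 μ,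
      ∀ ζ ∈ clarkeSubdiff (Jfun μ ν gν gτ jτ w) v,
        ‖ζ‖ ≤ Real.sqrt (μ Set.univ).toReal * (gbarν + gbarτ * cτ)) :=
  Jfun_wellDefined_locallyLipschitz_subdiff_bound_general μ ν hνmeas hνunit gν gτ hgνmeas hgτmeas
    gbarν gbarτ hgbarν hgbarτ hgνbd hgτbd Lgν Lgτ hgνlip hgτlip jτ hjτmeas cτ hcτ hjτlip e he hjτe
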